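/- For every z in the open unit disk, the integral over the unit disk of (1 - |ζ|²)·|G(z,ζ)| dσ(ζ) equals (1 - |z|²)(3 - |z|²)/16, and in particular is at most 3(1 - |z|²)/16. -/

import Mathlib

/-!
On the circle `|ζ| = s` one has `conj ζ = s² / ζ`, so away from `ζ = z`
`2π G(z, ζ) = log |ζ - s² z| - log s - log |ζ - z|`, and the circle averages of `log |· - a|`
(Jensen) give `⨍_{|ζ| = s} G(z, ζ) = -(2π)⁻¹ log (max s |z|)`. As `G ≥ 0` on the disk, the
integrand is nonnegative, so polar coordinates and Fubini reduce the area integral to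
`-∫₀¹ s (1 - s²) log (max s |z|) ds`, an elementary integral split at `s = |z|`.
-/

open MeasureTheory Complex

/-- Green function of the unit disk. -/
noncomputable def greenD (z ζ : ℂ) : ℝ :=
  (1 / (2 * Real.pi)) * Real.log ‖(1 - z * (starRingEnd ℂ) ζ) / (z - ζ)‖

open Real Set Metric Filter
open scoped ComplexConjugate

section CircleAverage

variable {E : Type*} [NormedAddCommGroup E] {f : ℂ → E} {c : ℂ} {R : ℝ}

theorem integral_Ioo_neg_pi_pi_circleMap [NormedSpace ℝ E] :
    ∫ θ in Ioo (-π) π, f (circleMap c R θ) = (2 * π) • circleAverage f c R := by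
  rw [circleAverage_eq_integral_add (-π), smul_inv_smul₀ (by positivity),
    intervalIntegral.integral_comp_add_right (fun θ ↦ f (circleMap c R θ)),
    intervalIntegral.integral_of_le (by linarith [pi_pos]), integral_Ioc_eq_integral_Ioo]
  ring_nf

theorem CircleIntegrable.integrableOn_Ioo_neg_pi_pi (hf : CircleIntegrable f c R) :
    IntegrableOn (fun θ ↦ f (circleMap c R θ)) (Ioo (-π) π) :=
  (((periodic_circleMap c R).comp f).intervalIntegrable₀ (by positivity) hf (-π) π
    |>.def'.mono_set (by rw [uIoc_of_le (by linarith [pi_pos])]; exact Ioo_subset_Ioc_self))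

end CircleAverage

theorem polarCoord_symm_eq_circleMap (p : ℝ × ℝ) :
    Complex.polarCoord.symm p = circleMap 0 p.1 p.2 := by
  simp [Complex.polarCoord_symm_apply, circleMap, exp_mul_I]

theorem integral_ball_eq_integral_mul_circleAverage {f : ℂ → ℝ} {R : ℝ} (hf : Measurable f)
    (hf_nonneg : ∀ ζ ∈ ball (0 : ℂ) R, 0 ≤ f ζ)
    (hf_circle : ∀ s ∈ Ioo 0 R, CircleIntegrable f 0 s)
    (hf_radial : IntegrableOn (fun s ↦ s * circleAverage f 0 s) (Ioo 0 R)) :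
    ∫ ζ in ball (0 : ℂ) R, f ζ = 2 * π * ∫ s in Ioo 0 R, s * circleAverage f 0 s := by
  set g : ℝ × ℝ → ℝ := fun p ↦ p.1 * f (circleMap 0 p.1 p.2)
  set T : Set (ℝ × ℝ) := Ioo 0 R ×ˢ Ioo (-π) π
  have hT : T ⊆ polarCoord.target := by
    rw [polarCoord_target]; exact prod_mono Ioo_subset_Ioi_self subset_rfl
  have polar : ∫ ζ in ball (0 : ℂ) R, f ζ = ∫ p in T, g p := by
    rw [← integral_indicator measurableSet_ball, ← Complex.integral_comp_polarCoord_symm,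
      ← inter_eq_right.mpr hT, ← setIntegral_indicator (measurableSet_Ioo.prod measurableSet_Ioo)]
    refine setIntegral_congr_fun polarCoord.open_target.measurableSet fun p hp ↦ ?_
    rw [polarCoord_target] at hp
    have hp1 : 0 < p.1 := hp.1
    simp only [polarCoord_symm_eq_circleMap, indicator, mem_ball_zero_iff, norm_circleMap_zero,
      abs_of_pos hp1, mem_prod, mem_Ioo, hp1, hp.2, g, smul_eq_mul]
    split_ifs <;> simp_all
  have inner : ∀ s ∈ Ioo 0 R,
      ∫ θ in Ioo (-π) π, g (s, θ) = 2 * π * (s * circleAverage f 0 s) := by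
    intro s _
    rw [integral_const_mul, integral_Ioo_neg_pi_pi_circleMap, smul_eq_mul]
    ring
  have norm_g : ∀ s ∈ Ioo 0 R, ∀ θ, ‖g (s, θ)‖ = g (s, θ) := fun s hs θ ↦
    Real.norm_of_nonneg <| mul_nonneg hs.1.le <| hf_nonneg _ <| by
      rw [mem_ball_zero_iff, norm_circleMap_zero, abs_of_pos hs.1]; exact hs.2
  have hg : Measurable g := measurable_fst.mul (hf.comp (by fun_prop))
  have integrable : IntegrableOn g T := by
    rw [IntegrableOn, Measure.volume_eq_prod, ← Measure.prod_restrict,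
      integrable_prod_iff hg.aestronglyMeasurable]
    constructor
    · filter_upwards [ae_restrict_mem measurableSet_Ioo] with s hs
      exact ((hf_circle s hs).integrableOn_Ioo_neg_pi_pi).const_mul s
    · refine IntegrableOn.congr_fun (hf_radial.const_mul (2 * π)) (fun s hs ↦ ?_)
        measurableSet_Ioo
      simp only [norm_g s hs, inner s hs]
  calc ∫ ζ in ball (0 : ℂ) R, f ζ = ∫ p in T, g p := polar
    _ = ∫ s in Ioo 0 R, ∫ θ in Ioo (-π) π, g (s, θ) := by
      rw [Measure.volume_eq_prod] at integrable ⊢; exact setIntegral_prod g integrable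
    _ = ∫ s in Ioo 0 R, 2 * π * (s * circleAverage f 0 s) :=
      setIntegral_congr_fun measurableSet_Ioo inner
    _ = 2 * π * ∫ s in Ioo 0 R, s * circleAverage f 0 s := integral_const_mul _ _

theorem continuous_mul_one_sub_sq_mul_log :
    Continuous fun s : ℝ ↦ s * (1 - s ^ 2) * Real.log s := by
  have := continuous_mul_log
  exact (show Continuous fun s : ℝ ↦ (1 - s ^ 2) * (s * Real.log s) by fun_prop).congr
    fun s ↦ by ring

theorem hasDerivAt_primitive_mul_one_sub_sq_mul_log {s : ℝ} (hs : s ≠ 0) :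
    HasDerivAt (fun s ↦ (s ^ 2 / 2 - s ^ 4 / 4) * Real.log s - s ^ 2 / 4 + s ^ 4 / 16)
      (s * (1 - s ^ 2) * Real.log s) s := by
  have h := (((((hasDerivAt_pow 2 s).div_const 2).sub ((hasDerivAt_pow 4 s).div_const 4)).mul
    (hasDerivAt_log hs)).sub ((hasDerivAt_pow 2 s).div_const 4)).add
    ((hasDerivAt_pow 4 s).div_const 16)
  refine h.congr_deriv ?_
  simp only [Pi.sub_apply, Nat.cast_ofNat]
  field_simp
  ring

theorem integral_mul_one_sub_sq_mul_log {r : ℝ} (hr0 : 0 ≤ r) (hr1 : r ≤ 1) :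
    ∫ s in r..1, s * (1 - s ^ 2) * Real.log s
      = -3 / 16 - ((r ^ 2 / 2 - r ^ 4 / 4) * Real.log r - r ^ 2 / 4 + r ^ 4 / 16) := by
  rw [intervalIntegral.integral_eq_sub_of_hasDeriv_right_of_le hr1 _
    (fun s hs ↦
      (hasDerivAt_primitive_mul_one_sub_sq_mul_log (hr0.trans_lt hs.1).ne').hasDerivWithinAt)
    (continuous_mul_one_sub_sq_mul_log.intervalIntegrable r 1)]
  · norm_num
  · have := continuous_mul_log
    refine Continuous.continuousOn ((show Continuous fun s : ℝ ↦
      (s / 2 - s ^ 3 / 4) * (s * Real.log s) - s ^ 2 / 4 + s ^ 4 / 16 by fun_prop).congr fun s ↦ ?_)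
    ring

section Radial

variable {r : ℝ}

theorem eqOn_mul_one_sub_sq_mul_log_max_left (hr0 : 0 ≤ r) :
    EqOn (fun s ↦ s * (1 - s ^ 2) * Real.log (max s r)) (fun s ↦ Real.log r * (s - s ^ 3))
      (uIcc 0 r) := by
  intro s hs
  rw [uIcc_of_le hr0] at hs
  simp only [max_eq_right hs.2]
  ring

theorem eqOn_mul_one_sub_sq_mul_log_max_right (hr1 : r ≤ 1) :
    EqOn (fun s ↦ s * (1 - s ^ 2) * Real.log (max s r)) (fun s ↦ s * (1 - s ^ 2) * Real.log s)
      (uIcc r 1) := by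
  intro s hs
  rw [uIcc_of_le hr1] at hs
  simp only [max_eq_left hs.1]

theorem intervalIntegrable_mul_one_sub_sq_mul_log_max (hr0 : 0 ≤ r) (hr1 : r ≤ 1) :
    IntervalIntegrable (fun s ↦ s * (1 - s ^ 2) * Real.log (max s r)) volume 0 1 :=
  (((continuous_const.mul (continuous_id.sub (continuous_pow 3))).intervalIntegrable 0 r).congr
      ((eqOn_mul_one_sub_sq_mul_log_max_left hr0).mono uIoc_subset_uIcc).symm).trans
    ((continuous_mul_one_sub_sq_mul_log.intervalIntegrable r 1).congr
      ((eqOn_mul_one_sub_sq_mul_log_max_right hr1).mono uIoc_subset_uIcc).symm)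

theorem integral_mul_one_sub_sq_mul_log_max (hr0 : 0 ≤ r) (hr1 : r ≤ 1) :
    ∫ s in (0 : ℝ)..1, s * (1 - s ^ 2) * Real.log (max s r)
      = -((1 - r ^ 2) * (3 - r ^ 2) / 16) := by
  have h := intervalIntegrable_mul_one_sub_sq_mul_log_max hr0 hr1
  have h0r : uIcc 0 r ⊆ uIcc 0 1 := uIcc_subset_uIcc left_mem_uIcc (mem_uIcc_of_le hr0 hr1)
  have hr1' : uIcc r 1 ⊆ uIcc 0 1 := uIcc_subset_uIcc (mem_uIcc_of_le hr0 hr1) right_mem_uIcc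
  rw [← intervalIntegral.integral_add_adjacent_intervals (h.mono_set h0r) (h.mono_set hr1'),
    intervalIntegral.integral_congr (eqOn_mul_one_sub_sq_mul_log_max_left hr0),
    intervalIntegral.integral_congr (eqOn_mul_one_sub_sq_mul_log_max_right hr1),
    intervalIntegral.integral_const_mul, intervalIntegral.integral_sub
      (continuous_id'.intervalIntegrable 0 r) ((continuous_pow 3).intervalIntegrable 0 r),
    integral_id, integral_pow, integral_mul_one_sub_sq_mul_log hr0 hr1]
  ring

end Radial

theorem normSq_one_sub_mul_conj_sub_normSq_sub (z ζ : ℂ) :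
    normSq (1 - z * conj ζ) - normSq (z - ζ) = (1 - normSq z) * (1 - normSq ζ) := by
  simp only [normSq_apply, sub_re, sub_im, mul_re, mul_im, one_re, one_im, conj_re, conj_im]
  ring

theorem norm_sub_le_norm_one_sub_mul_conj {z ζ : ℂ} (hz : ‖z‖ ≤ 1) (hζ : ‖ζ‖ ≤ 1) :
    ‖z - ζ‖ ≤ ‖1 - z * conj ζ‖ := by
  have key := normSq_one_sub_mul_conj_sub_normSq_sub z ζ
  rw [← sq_le_sq₀ (norm_nonneg _) (norm_nonneg _), ← normSq_eq_norm_sq, ← normSq_eq_norm_sq]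
  rw [← sq_le_one_iff₀ (norm_nonneg _), ← normSq_eq_norm_sq] at hz hζ
  nlinarith

theorem greenD_nonneg {z ζ : ℂ} (hz : ‖z‖ ≤ 1) (hζ : ‖ζ‖ ≤ 1) : 0 ≤ greenD z ζ := by
  rcases eq_or_ne z ζ with rfl | hne
  · simp [greenD]
  refine mul_nonneg (by positivity) (Real.log_nonneg ?_)
  rw [norm_div, one_le_div (norm_pos_iff.mpr (sub_ne_zero.mpr hne))]
  exact norm_sub_le_norm_one_sub_mul_conj hz hζ

theorem norm_mul_norm_one_sub_mul_conj (z ζ : ℂ) :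
    ‖ζ‖ * ‖1 - z * conj ζ‖ = ‖ζ - (‖ζ‖ ^ 2 : ℝ) * z‖ := by
  rw [← norm_mul, mul_sub, mul_one, ← mul_assoc, mul_comm ζ z, mul_assoc, mul_conj,
    normSq_eq_norm_sq]
  push_cast
  ring_nf

theorem log_add_posLog_inv_mul {s t : ℝ} (hs : 0 < s) (ht : 0 ≤ t) :
    Real.log s + log⁺ (s⁻¹ * t) = Real.log (max s t) := by
  rw [posLog_eq_log_max_one (by positivity), ← Real.log_mul hs.ne' (by positivity),
    mul_max_of_nonneg _ _ hs.le, mul_one, mul_inv_cancel_left₀ hs.ne']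

theorem greenD_eventuallyEq_on_sphere {z : ℂ} {s : ℝ} (hs : 0 < s) (hsz : s * ‖z‖ < 1) :
    greenD z =ᶠ[codiscreteWithin (sphere 0 |s|)]
      fun ζ ↦ (2 * π)⁻¹ • (Real.log ‖ζ - (s ^ 2 : ℝ) * z‖ - Real.log s - Real.log ‖ζ - z‖) := by
  filter_upwards [compl_singleton_mem_codiscreteWithin z, self_mem_codiscreteWithin _]
    with ζ (hζz : ζ ≠ z) hζ
  rw [mem_sphere_zero_iff_norm, abs_of_pos hs] at hζ
  have hmul := norm_mul_norm_one_sub_mul_conj z ζ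
  rw [hζ] at hmul
  have hA : ‖1 - z * conj ζ‖ ≠ 0 := by
    intro h
    rw [h, mul_zero, eq_comm, norm_eq_zero, sub_eq_zero] at hmul
    have := congrArg norm hmul
    rw [norm_mul, norm_real, Real.norm_of_nonneg (by positivity), hζ] at this
    nlinarith
  rw [greenD, norm_div, Real.log_div hA (norm_ne_zero_iff.mpr (sub_ne_zero.mpr hζz.symm)),
    ← hmul, Real.log_mul hs.ne' hA, norm_sub_rev z ζ, smul_eq_mul]
  ring

theorem circleIntegrable_greenD {z : ℂ} {s : ℝ} (hs : 0 < s) (hsz : s * ‖z‖ < 1) :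
    CircleIntegrable (greenD z) 0 s :=
  (CircleIntegrable.congr_codiscreteWithin (greenD_eventuallyEq_on_sphere hs hsz).symm
    (by fun_prop))

theorem circleAverage_greenD {z : ℂ} {s : ℝ} (hs : 0 < s) (hsz : s * ‖z‖ < 1) :
    circleAverage (greenD z) 0 s = -(2 * π)⁻¹ * Real.log (max s ‖z‖) := by
  rw [circleAverage_congr_codiscreteWithin (greenD_eventuallyEq_on_sphere hs hsz) hs.ne',
    circleAverage_fun_smul, circleAverage_fun_sub (by fun_prop) (by fun_prop),
    circleAverage_fun_sub (by fun_prop) (by fun_prop), circleAverage_const,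
    circleAverage_log_norm_sub_const_eq_log_radius_add_posLog hs.ne',
    circleAverage_log_norm_sub_const_eq_log_radius_add_posLog hs.ne']
  have h_small : log⁺ (s⁻¹ * ‖((s ^ 2 : ℝ) : ℂ) * z‖) = 0 := by
    rw [posLog_eq_zero_iff, norm_mul, norm_real, Real.norm_of_nonneg (by positivity),
      abs_of_nonneg (by positivity)]
    calc s⁻¹ * (s ^ 2 * ‖z‖) = s * ‖z‖ := by field_simp
      _ ≤ 1 := hsz.le
  rw [zero_sub, zero_sub, norm_neg, norm_neg, h_small, log_add_posLog_inv_mul hs (norm_nonneg z),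
    smul_eq_mul]
  ring

section WeightedGreen

variable {z : ℂ} {s : ℝ}

theorem eqOn_sphere_weighted_abs_greenD (hz : ‖z‖ ≤ 1) (hs0 : 0 ≤ s) (hs1 : s ≤ 1) :
    EqOn (fun ζ ↦ (1 - ‖ζ‖ ^ 2) * |greenD z ζ|) (fun ζ ↦ (1 - s ^ 2) • greenD z ζ)
      (sphere 0 |s|) := by
  intro ζ hζ
  rw [mem_sphere_zero_iff_norm, abs_of_nonneg hs0] at hζ
  simp only [hζ, smul_eq_mul, abs_of_nonneg (greenD_nonneg hz (hζ.trans_le hs1))]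

theorem circleIntegrable_weighted_abs_greenD (hz : ‖z‖ < 1) (hs : s ∈ Ioo 0 1) :
    CircleIntegrable (fun ζ ↦ (1 - ‖ζ‖ ^ 2) * |greenD z ζ|) 0 s := by
  rw [circleIntegrable_congr (eqOn_sphere_weighted_abs_greenD hz.le hs.1.le hs.2.le)]
  exact (circleIntegrable_greenD hs.1 (by nlinarith [hs.1, hs.2, norm_nonneg z])).const_mul _

theorem circleAverage_weighted_abs_greenD (hz : ‖z‖ < 1) (hs : s ∈ Ioo 0 1) :
    circleAverage (fun ζ ↦ (1 - ‖ζ‖ ^ 2) * |greenD z ζ|) 0 s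
      = -(2 * π)⁻¹ * ((1 - s ^ 2) * Real.log (max s ‖z‖)) := by
  rw [circleAverage_congr_sphere (eqOn_sphere_weighted_abs_greenD hz.le hs.1.le hs.2.le),
    circleAverage_fun_smul, circleAverage_greenD hs.1 (by nlinarith [hs.1, hs.2, norm_nonneg z]),
    smul_eq_mul]
  ring

end WeightedGreen

theorem stmt1 (z : ℂ) (hz : z ∈ Metric.ball (0 : ℂ) 1) :
    (∫ ζ in Metric.ball (0 : ℂ) 1, (1 - ‖ζ‖ ^ 2) * |greenD z ζ|)
      = (1 - ‖z‖ ^ 2) * (3 - ‖z‖ ^ 2) / 16 ∧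
    (∫ ζ in Metric.ball (0 : ℂ) 1, (1 - ‖ζ‖ ^ 2) * |greenD z ζ|)
      ≤ 3 * (1 - ‖z‖ ^ 2) / 16 := by
  rw [mem_ball_zero_iff] at hz
  have radial : EqOn (fun s ↦ s * circleAverage (fun ζ ↦ (1 - ‖ζ‖ ^ 2) * |greenD z ζ|) 0 s)
      (fun s ↦ -(2 * π)⁻¹ * (s * (1 - s ^ 2) * Real.log (max s ‖z‖))) (Ioo 0 1) := fun s hs ↦ by
    simp only [circleAverage_weighted_abs_greenD hz hs]
    ring
  have hφ := (intervalIntegrable_iff_integrableOn_Ioo_of_le zero_le_one).mp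
    (intervalIntegrable_mul_one_sub_sq_mul_log_max (norm_nonneg z) hz.le)
  have value : ∫ ζ in ball (0 : ℂ) 1, (1 - ‖ζ‖ ^ 2) * |greenD z ζ|
      = (1 - ‖z‖ ^ 2) * (3 - ‖z‖ ^ 2) / 16 := by
    rw [integral_ball_eq_integral_mul_circleAverage (by unfold greenD; fun_prop)
      (fun ζ hζ ↦ mul_nonneg (by nlinarith [norm_nonneg ζ, mem_ball_zero_iff.mp hζ])
        (abs_nonneg _))
      (fun s hs ↦ circleIntegrable_weighted_abs_greenD hz hs)
      (IntegrableOn.congr_fun (hφ.const_mul _) radial.symm measurableSet_Ioo),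
      setIntegral_congr_fun measurableSet_Ioo radial, integral_const_mul,
      ← integral_Ioc_eq_integral_Ioo, ← intervalIntegral.integral_of_le zero_le_one,
      integral_mul_one_sub_sq_mul_log_max (norm_nonneg z) hz.le]
    field_simp
  refine ⟨value, value ▸ ?_⟩
  have : ‖z‖ ^ 2 ≤ 1 := by nlinarith [norm_nonneg z]
  nlinarith [mul_nonneg (sq_nonneg ‖z‖) (sub_nonneg.mpr this)]
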